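/- For every positive integer n, n · ∫_0^1 (1-t)^{n-1} log² t dt = H_n^{(2)} + (H_n)². -/

import Mathlib

/-!
Integrate by parts against `(1 - (1 - t)^(n+1)) / (n+1) = t · ∑_{j ≤ n} (1 - t)^j / (n+1)`, the
antiderivative of `(1 - t)^n` vanishing at `0`: the boundary terms vanish and the factor `t` cancels
the `1/t` from differentiating `log^(k+1) t`, so
`∫ (1-t)^n log^(k+1) t = -(k+1)/(n+1) · ∑_{j ≤ n} ∫ (1-t)^j log^k t`.
Applied twice (with `∫ (1-t)^j = 1/(j+1)`) this gives `n ∫ (1-t)^(n-1) log² t = 2 ∑_{j ≤ n} H_j / j`,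
and `2 ∑_{j ≤ n} H_j / j = H_n^(2) + H_n²` by induction from `(H + 1/n)² = H² + 2H/n + 1/n²`.
-/

/-- The generalized harmonic number `H_n^{(m)} = ∑_{k=1}^n 1/k^m` as a real number. -/
noncomputable def genHarmonic (m n : ℕ) : ℝ := ∑ k ∈ Finset.range n, (1 : ℝ) / ((k + 1 : ℝ)) ^ m

open Real Finset Set MeasureTheory intervalIntegral

lemma abs_log_le_rpow_neg_div {t ε : ℝ} (ht0 : 0 < t) (ht1 : t ≤ 1) (hε : 0 < ε) :
    |log t| ≤ t ^ (-ε) / ε := by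
  rw [abs_of_nonpos (log_nonpos ht0.le ht1), ← log_inv, rpow_neg ht0.le, ← inv_rpow ht0.le]
  exact log_le_rpow_div (inv_nonneg.2 ht0.le) hε

lemma abs_log_pow_le (k : ℕ) {t : ℝ} (ht0 : 0 < t) (ht1 : t ≤ 1) :
    |log t| ^ k ≤ (k + 1) ^ k * t ^ (-(k / (k + 1) : ℝ)) := by
  have hε : (0 : ℝ) < 1 / (k + 1) := by positivity
  calc |log t| ^ k ≤ (t ^ (-(1 / (k + 1) : ℝ)) / (1 / (k + 1))) ^ k :=
        pow_le_pow_left₀ (abs_nonneg _) (abs_log_le_rpow_neg_div ht0 ht1 hε) k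
    _ = (k + 1) ^ k * t ^ (-(1 / (k + 1) : ℝ) * k) := by
        rw [rpow_mul_natCast ht0.le]; field_simp; rw [mul_pow]
    _ = (k + 1) ^ k * t ^ (-(k / (k + 1) : ℝ)) := by ring_nf

lemma intervalIntegrable_one_sub_pow_mul_log_pow (n k : ℕ) :
    IntervalIntegrable (fun t => (1 - t) ^ n * log t ^ k) volume 0 1 := by
  have hexp : (-1 : ℝ) < -(k / (k + 1)) := by
    rw [neg_lt_neg_iff, div_lt_one (by positivity)]; linarith
  refine ((intervalIntegrable_rpow' hexp).const_mul ((k + 1 : ℝ) ^ k)).mono_fun'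
    (by fun_prop) ?_
  rw [Filter.EventuallyLE, ae_restrict_iff' measurableSet_uIoc]
  refine .of_forall fun t ht => ?_
  rw [uIoc_of_le zero_le_one] at ht
  have h1t : |1 - t| ≤ 1 := abs_le.2 ⟨by linarith [ht.2], by linarith [ht.1]⟩
  calc ‖(1 - t) ^ n * log t ^ k‖ = |1 - t| ^ n * |log t| ^ k := by
        rw [norm_mul, norm_pow, norm_pow, Real.norm_eq_abs, Real.norm_eq_abs]
    _ ≤ 1 * |log t| ^ k := by gcongr; exact pow_le_one₀ (abs_nonneg _) h1t
    _ ≤ (k + 1) ^ k * t ^ (-(k / (k + 1) : ℝ)) := by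
        rw [one_mul]; exact abs_log_pow_le k ht.1 ht.2

lemma continuousOn_mul_log_pow_succ (k : ℕ) :
    ContinuousOn (fun t => t * log t ^ (k + 1)) (Ici 0) := by
  -- `t log^(k+1) t = ((k+1) s log s)^(k+1)` with `s = t^(1/(k+1))`, which reduces to `x log x`.
  have hk : ((k + 1 : ℕ) : ℝ) ≠ 0 := by positivity
  refine (((continuous_mul_log.comp (continuous_rpow_const (q := ((k + 1 : ℕ) : ℝ)⁻¹)
    (by positivity))).const_mul ((k + 1 : ℕ) : ℝ)).pow (k + 1)).continuousOn.congr fun t ht => ?_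
  have ht : (0 : ℝ) ≤ t := ht
  have hs : (t ^ ((k + 1 : ℕ) : ℝ)⁻¹) ^ (k + 1) = t := rpow_inv_natCast_pow ht (by omega)
  simp only [Pi.pow_apply, Function.comp_apply]
  rcases ht.eq_or_lt with rfl | ht0
  · rw [zero_rpow (inv_ne_zero hk)]; simp
  · rw [log_rpow ht0, mul_left_comm (t ^ _), mul_inv_cancel_left₀ hk, mul_pow, hs]

lemma mul_geom_sum_one_sub (t : ℝ) (n : ℕ) :
    t * ∑ j ∈ range n, (1 - t) ^ j = 1 - (1 - t) ^ n := by
  simpa using mul_neg_geom_sum (1 - t) n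

lemma hasDerivAt_one_sub_one_sub_pow_mul_log_pow {n k : ℕ} {x : ℝ} (hx : x ≠ 0) :
    HasDerivAt (fun t => (1 - (1 - t) ^ (n + 1)) * log t ^ (k + 1) / (n + 1))
      ((1 - x) ^ n * log x ^ (k + 1) + (k + 1) / (n + 1) *
        ∑ j ∈ range (n + 1), (1 - x) ^ j * log x ^ k) x := by
  have h := ((((hasDerivAt_id x).const_sub 1).pow (n + 1)).const_sub 1).mul
    ((hasDerivAt_log hx).pow (k + 1)) |>.div_const ((n : ℝ) + 1)
  refine h.congr_deriv ?_
  simp only [Pi.pow_apply, id]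
  rw [← sum_mul, ← mul_geom_sum_one_sub x]
  field_simp
  push_cast
  ring

lemma integral_one_sub_pow_mul_log_pow_succ (n k : ℕ) :
    ∫ t in (0 : ℝ)..1, (1 - t) ^ n * log t ^ (k + 1) =
      -((k + 1) / (n + 1)) * ∑ j ∈ range (n + 1), ∫ t in (0 : ℝ)..1, (1 - t) ^ j * log t ^ k := by
  have hcont : ContinuousOn (fun t => (1 - (1 - t) ^ (n + 1)) * log t ^ (k + 1) / (n + 1))
      (Icc 0 1) := by
    have hG : Continuous fun t : ℝ => ∑ j ∈ range (n + 1), (1 - t) ^ j := by fun_prop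
    refine ((hG.continuousOn.mul ((continuousOn_mul_log_pow_succ k).mono Icc_subset_Ici_self)
      ).div_const ((n : ℝ) + 1)).congr fun t _ => ?_
    simp only [Pi.mul_apply, ← mul_geom_sum_one_sub t]
    ring
  have hint j := intervalIntegrable_one_sub_pow_mul_log_pow j k
  have hsum : IntervalIntegrable (fun t => ∑ j ∈ range (n + 1), (1 - t) ^ j * log t ^ k)
      volume 0 1 := by
    simpa only [Finset.sum_fn] using IntervalIntegrable.sum (range (n + 1)) fun j _ => hint j
  have hftc := integral_eq_sub_of_hasDeriv_right_of_le zero_le_one hcont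
    (fun x hx => (hasDerivAt_one_sub_one_sub_pow_mul_log_pow hx.1.ne').hasDerivWithinAt)
    ((intervalIntegrable_one_sub_pow_mul_log_pow n (k + 1)).add (hsum.const_mul _))
  rw [integral_add (intervalIntegrable_one_sub_pow_mul_log_pow n (k + 1))
    (hsum.const_mul _), intervalIntegral.integral_const_mul,
    intervalIntegral.integral_finsetSum fun j _ => hint j] at hftc
  simp only [sub_self, zero_pow (Nat.succ_ne_zero _), sub_zero, one_pow, log_one, log_zero,
    mul_zero, zero_div] at hftc
  linarith

lemma integral_one_sub_pow (n : ℕ) : ∫ t in (0 : ℝ)..1, (1 - t) ^ n = 1 / (n + 1) := by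
  simp [integral_comp_sub_left fun t => t ^ n]

lemma integral_one_sub_pow_mul_log (n : ℕ) :
    ∫ t in (0 : ℝ)..1, (1 - t) ^ n * log t = -(genHarmonic 1 (n + 1) / (n + 1)) := by
  simpa [integral_one_sub_pow, genHarmonic, neg_div, div_eq_inv_mul, mul_sum] using
    integral_one_sub_pow_mul_log_pow_succ n 0

lemma integral_one_sub_pow_mul_log_sq (n : ℕ) :
    ∫ t in (0 : ℝ)..1, (1 - t) ^ n * log t ^ 2 =
      2 / (n + 1) * ∑ j ∈ range (n + 1), genHarmonic 1 (j + 1) / (j + 1) := by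
  rw [integral_one_sub_pow_mul_log_pow_succ n 1]
  simp only [pow_one, integral_one_sub_pow_mul_log, sum_neg_distrib]
  ring

lemma genHarmonic_succ (m n : ℕ) : genHarmonic m (n + 1) = genHarmonic m n + 1 / (n + 1) ^ m :=
  sum_range_succ _ _

lemma genHarmonic_two_add_sq_genHarmonic_one (n : ℕ) :
    genHarmonic 2 n + genHarmonic 1 n ^ 2 = 2 * ∑ j ∈ range n, genHarmonic 1 (j + 1) / (j + 1) := by
  induction n with
  | zero => simp [genHarmonic]
  | succ m ih =>
    rw [sum_range_succ, genHarmonic_succ 2, genHarmonic_succ 1, ← one_div_pow]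
    linear_combination ih

theorem integral_log_sq_general (n : ℕ) :
    (n : ℝ) * ∫ t in (0:ℝ)..1, (1 - t) ^ (n - 1) * (Real.log t) ^ 2 =
      genHarmonic 2 n + (genHarmonic 1 n) ^ 2 := by
  cases n with
  | zero => simp [genHarmonic]
  | succ m =>
    rw [Nat.add_sub_cancel, integral_one_sub_pow_mul_log_sq, genHarmonic_two_add_sq_genHarmonic_one]
    push_cast
    field_simp

theorem integral_log_sq (n : ℕ) (hn : 0 < n) :
    (n : ℝ) * ∫ t in (0:ℝ)..1, (1 - t) ^ (n - 1) * (Real.log t) ^ 2 =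
      genHarmonic 2 n + (genHarmonic 1 n) ^ 2 :=
  integral_log_sq_general n
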